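/- Marginal coverage of split conformal prediction (upper bound): let W_1, …, W_{N+1} be exchangeable random elements of a measurable space 𝒲, let s : 𝒲 → ℝ be a measurable nonconformity score function, set s_i := s(W_i), and assume the scores s_1, …, s_{N+1} are almost surely pairwise distinct. Then for every α ∈ [0,1], P( s(W_{N+1}) ≤ Q_{1−α}(s_1, …, s_N, +∞) ) ≤ 1 − α + 1/(N+1). -/

import Mathlib

open MeasureTheory

/-- Exchangeability: for every permutation `π`, the joint law of the permuted family
equals the joint law of the original family. -/
def Exchangeable {Ω : Type*} [MeasurableSpace Ω] (P : Measure Ω)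
    {m : ℕ} {α : Type*} [MeasurableSpace α] (Z : Fin m → Ω → α) : Prop :=
  ∀ π : Equiv.Perm (Fin m),
    Measure.map (fun ω => fun i => Z (π i) ω) P = Measure.map (fun ω => fun i => Z i ω) P

/-- Empirical `β`-quantile of extended-real values `z 1, …, z m`:
`inf { x ∈ ℝ : (1/m) · #{ i : z i ≤ x } ≥ β }`, with `inf ∅ = +∞` (in `EReal`). -/
noncomputable def empQuantile {m : ℕ} (z : Fin m → EReal) (β : ℝ) : EReal :=
  sInf ((fun r : ℝ => (r : EReal)) ''
    {r : ℝ | β ≤ ((Finset.univ.filter (fun i => z i ≤ (r : EReal))).card : ℝ) / m})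

/-- The empirical `β`-quantile of the `n + 1` values `z 1, …, z n, +∞`. -/
noncomputable def augQuantile {n : ℕ} (z : Fin n → ℝ) (β : ℝ) : EReal :=
  empQuantile (Fin.snoc (fun i => ((z i : ℝ) : EReal)) ⊤) β

/-!
On the event where the scores are distinct, `s_{N+1} ≤ Q_{1-α}(s_1, …, s_N, +∞)` forces the rank
of `s_{N+1}` among all `N + 1` scores to be at most `k = ⌈(1 - α)(N + 1)⌉`: otherwise some threshold
strictly below `s_{N+1}` already has `k` calibration scores under it. By exchangeability all ranks
have the same law, and at most `k` of the `N + 1` distinct ranks are `≤ k`, so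
`(N + 1) · P(rank of s_{N+1} ≤ k) ≤ k`, and `k / (N + 1) ≤ 1 - α + 1 / (N + 1)`.
-/

open Filter Topology Finset Function
open scoped ENNReal

section Rank

variable {ι α : Type*} [Fintype ι] [LinearOrder α]

def rank (v : ι → α) (j : ι) : ℕ := #{i | v i ≤ v j}

lemma rank_comp_perm (v : ι → α) (σ : Equiv.Perm ι) (j : ι) :
    rank (v ∘ σ) j = rank v (σ j) :=
  card_equiv σ (by simp)

lemma one_le_rank (v : ι → α) (j : ι) : 1 ≤ rank v j :=
  card_pos.2 ⟨j, by simp⟩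

lemma rank_lt_rank {v : ι → α} {a b : ι} (h : v a < v b) : rank v a < rank v b :=
  card_lt_card <| (ssubset_iff_of_subset fun i hi => by
    simp only [mem_filter, mem_univ, true_and] at hi ⊢; exact hi.trans h.le).2
    ⟨b, by simp, by simpa using h⟩

lemma rank_injective {v : ι → α} (hv : Injective v) : Injective (rank v) := fun _ _ hab =>
  hv <| le_antisymm (not_lt.1 fun h => (rank_lt_rank h).ne' hab)
    (not_lt.1 fun h => (rank_lt_rank h).ne hab)

lemma card_rank_le_le {v : ι → α} (hv : Injective v) (k : ℕ) : #{j | rank v j ≤ k} ≤ k := by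
  simpa using card_le_card_of_injOn (t := Icc 1 k) (rank v)
    (fun j hj => mem_Icc.2 ⟨one_le_rank v j, (mem_filter.1 hj).2⟩)
    (rank_injective hv).injOn

lemma rank_last {n : ℕ} (v : Fin (n + 1) → α) :
    rank v (Fin.last n) = #{i : Fin n | v i.castSucc ≤ v (Fin.last n)} + 1 := by
  rw [rank, card_filter, Fin.sum_univ_castSucc, card_filter]
  simp

end Rank

lemma card_filter_snoc_top_le {n : ℕ} (z : Fin n → ℝ) (r : ℝ) :
    #{i | (Fin.snoc (fun i => (z i : EReal)) ⊤ : Fin (n + 1) → EReal) i ≤ r} =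
      #{i | z i ≤ r} := by
  rw [card_filter, Fin.sum_univ_castSucc, card_filter]
  simp

lemma augQuantile_le_of_le_card {n : ℕ} {z : Fin n → ℝ} {β r : ℝ}
    (h : β * (n + 1) ≤ #{i | z i ≤ r}) : augQuantile z β ≤ r := by
  refine sInf_le ⟨r, ?_, rfl⟩
  rw [Set.mem_ofPred_eq, card_filter_snoc_top_le, le_div_iff₀ (by positivity)]
  exact_mod_cast h

lemma exists_lt_forall_le_of_lt {κ : Type*} [Finite κ] (f : κ → ℝ) (b : ℝ) :
    ∃ r < b, ∀ i, f i < b → f i ≤ r := by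
  suffices h : ∀ᶠ r in 𝓝[<] b, r < b ∧ ∀ i, f i < b → f i ≤ r from h.exists
  refine eventually_mem_nhdsWithin.and (eventually_all.2 fun i => ?_)
  by_cases hi : f i < b
  · exact ((eventually_gt_nhds hi).filter_mono nhdsWithin_le_nhds).mono fun r hr _ => hr.le
  · exact Eventually.of_forall fun r h => absurd h hi

lemma rank_last_le_ceil_of_le_augQuantile {n : ℕ} {v : Fin (n + 1) → ℝ} (hv : Injective v)
    {β : ℝ} (h : (v (Fin.last n) : EReal) ≤ augQuantile (fun i => v i.castSucc) β) :
    rank v (Fin.last n) ≤ ⌈β * (n + 1)⌉₊ := by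
  by_contra! hk
  obtain ⟨r, hr, hle⟩ := exists_lt_forall_le_of_lt (fun i : Fin n => v i.castSucc) (v (Fin.last n))
  have hcount : ⌈β * (n + 1)⌉₊ ≤ #{i : Fin n | v i.castSucc ≤ r} := by
    rw [rank_last] at hk
    refine (Nat.lt_succ_iff.mp hk).trans (card_le_card fun i hi => ?_)
    simp only [mem_filter, mem_univ, true_and] at hi ⊢
    exact hle i (hi.lt_of_ne (hv.ne (Fin.castSucc_lt_last i).ne))
  have hq := h.trans (augQuantile_le_of_le_card ((Nat.le_ceil _).trans (by exact_mod_cast hcount)))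
  exact hr.not_ge (EReal.coe_le_coe_iff.1 hq)

section Measure

variable {Ω : Type*} [MeasurableSpace Ω] {P : Measure Ω}

lemma measurable_rank {ι : Type*} [Fintype ι] (j : ι) :
    Measurable fun v : ι → ℝ => rank v j := by
  simp only [rank, card_filter]
  exact Finset.measurable_sum _ fun i _ => Measurable.ite
    (measurableSet_le (measurable_pi_apply i) (measurable_pi_apply j))
    measurable_const measurable_const

open Classical in
lemma sum_measure_le_of_ae_card_le {ι : Type*} [Fintype ι] {A : ι → Set Ω}
    (hA : ∀ j, MeasurableSet (A j)) {k : ℕ} (h : ∀ᵐ ω ∂P, #{j | ω ∈ A j} ≤ k) :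
    ∑ j, P (A j) ≤ k * P Set.univ := by
  calc ∑ j, P (A j) = ∫⁻ ω, ∑ j, (A j).indicator 1 ω ∂P := by
        rw [lintegral_finsetSum _ fun j _ => measurable_one.indicator (hA j)]
        simp only [lintegral_indicator_one (hA _)]
    _ ≤ ∫⁻ _, (k : ℝ≥0∞) ∂P := lintegral_mono_ae <| h.mono fun ω hω => by
        simp only [Set.indicator_apply, Pi.one_apply, sum_boole]
        exact_mod_cast hω
    _ = k * P Set.univ := lintegral_const _

lemma Exchangeable.comp {m : ℕ} {α β : Type*} [MeasurableSpace α] [MeasurableSpace β]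
    {Z : Fin m → Ω → α} (hZ : Exchangeable P Z) (hmeas : ∀ i, Measurable (Z i))
    {f : α → β} (hf : Measurable f) : Exchangeable P fun i ω => f (Z i ω) := by
  intro σ
  have hF : Measurable fun u : Fin m → α => fun i => f (u i) :=
    measurable_pi_lambda _ fun i => hf.comp (measurable_pi_apply i)
  have := congrArg (Measure.map fun u : Fin m → α => fun i => f (u i)) (hZ σ)
  rwa [Measure.map_map hF (measurable_pi_lambda _ fun i => hmeas _),
    Measure.map_map hF (measurable_pi_lambda _ hmeas)] at this

lemma Exchangeable.measure_perm_mem {m : ℕ} {α : Type*} [MeasurableSpace α]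
    {Z : Fin m → Ω → α} (hZ : Exchangeable P Z) (hmeas : ∀ i, Measurable (Z i))
    (σ : Equiv.Perm (Fin m)) {B : Set (Fin m → α)} (hB : MeasurableSet B) :
    P {ω | (fun i => Z (σ i) ω) ∈ B} = P {ω | (fun i => Z i ω) ∈ B} := by
  have := congrArg (· B) (hZ σ)
  rwa [Measure.map_apply (measurable_pi_lambda _ fun i => hmeas _) hB,
    Measure.map_apply (measurable_pi_lambda _ hmeas) hB] at this

lemma Exchangeable.card_mul_measure_rank_le [IsProbabilityMeasure P] {m : ℕ}
    {Z : Fin m → Ω → ℝ} (hZ : Exchangeable P Z) (hmeas : ∀ i, Measurable (Z i))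
    (hinj : ∀ᵐ ω ∂P, Injective fun i => Z i ω) (j : Fin m) (k : ℕ) :
    m * P {ω | rank (fun i => Z i ω) j ≤ k} ≤ k := by
  have hB : ∀ i, MeasurableSet {v : Fin m → ℝ | rank v i ≤ k} := fun i =>
    measurable_rank i measurableSet_Iic
  have hsame : ∀ i,
      P {ω | rank (fun l => Z l ω) i ≤ k} = P {ω | rank (fun l => Z l ω) j ≤ k} := by
    intro i
    have hswap (ω : Ω) : rank (fun l => Z (Equiv.swap i j l) ω) j = rank (fun l => Z l ω) i := by
      rw [← comp_def (fun l => Z l ω), rank_comp_perm, Equiv.swap_apply_right]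
    simpa only [Set.mem_ofPred_eq, hswap] using
      hZ.measure_perm_mem hmeas (Equiv.swap i j) (hB j)
  calc (m : ℝ≥0∞) * P {ω | rank (fun i => Z i ω) j ≤ k}
        = ∑ i, P {ω | rank (fun l => Z l ω) i ≤ k} := by simp [hsame]
    _ ≤ k * P Set.univ := sum_measure_le_of_ae_card_le
        (fun i => (measurable_rank i).comp (measurable_pi_lambda _ hmeas) measurableSet_Iic)
        (hinj.mono fun ω h => by simpa using card_rank_le_le h k)
    _ = k := by simp

end Measure

lemma natCast_ceil_div_le (x : ℝ) (n : ℕ) :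
    (⌈x * (n + 1)⌉₊ : ℝ≥0∞) / (n + 1) ≤ ENNReal.ofReal (x + 1 / (n + 1)) := by
  refine ENNReal.div_le_of_le_mul ?_
  have hcast : (n : ℝ≥0∞) + 1 = ENNReal.ofReal (n + 1) := by
    rw [← Nat.cast_succ, ← ENNReal.ofReal_natCast, Nat.cast_succ]
  have hmul : (x + 1 / (n + 1)) * (n + 1) = x * (n + 1) + 1 := by field_simp
  rw [hcast, ← ENNReal.ofReal_mul' (by positivity), hmul, ← ENNReal.ofReal_natCast,
    ENNReal.ofReal_le_ofReal_iff']
  rcases le_or_gt (x * (n + 1)) 0 with h | h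
  · exact .inr (by simp [Nat.ceil_eq_zero.2 h])
  · exact .inl (Nat.ceil_lt_add_one h.le).le

theorem stmt3_general {Ω : Type*} [MeasurableSpace Ω] (P : Measure Ω) [IsProbabilityMeasure P]
    {𝒲 : Type*} [MeasurableSpace 𝒲]
    (N : ℕ) (W : Fin (N + 1) → Ω → 𝒲) (hmeas : ∀ i, Measurable (W i))
    (hexch : Exchangeable P W)
    (s : 𝒲 → ℝ) (hs : Measurable s)
    (hdist : ∀ᵐ ω ∂P, ∀ i j : Fin (N + 1), i ≠ j → s (W i ω) ≠ s (W j ω))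
    (α : ℝ) :
    P {ω | (s (W (Fin.last N) ω) : EReal) ≤
        augQuantile (fun i : Fin N => s (W (Fin.castSucc i) ω)) (1 - α)} ≤
      ENNReal.ofReal (1 - α + 1 / (N + 1)) := by
  have hinj : ∀ᵐ ω ∂P, Injective fun i => s (W i ω) :=
    hdist.mono fun ω h i j => not_imp_not.1 (h i j)
  have hrank := (hexch.comp hmeas hs).card_mul_measure_rank_le (fun i => hs.comp (hmeas i))
    hinj (Fin.last N) ⌈(1 - α) * (N + 1)⌉₊
  calc _ ≤ P {ω | rank (fun i => s (W i ω)) (Fin.last N) ≤ ⌈(1 - α) * (N + 1)⌉₊} :=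
        measure_mono_ae <| hinj.mono fun ω h hω => rank_last_le_ceil_of_le_augQuantile h hω
    _ ≤ ⌈(1 - α) * (N + 1)⌉₊ / (N + 1) := by
        rw [ENNReal.le_div_iff_mul_le (by simp) (by simp), mul_comm]
        exact_mod_cast hrank
    _ ≤ _ := natCast_ceil_div_le _ _

/-- Marginal coverage of split conformal prediction (upper bound), assuming the
scores `s (W 1), …, s (W (N+1))` are almost surely pairwise distinct. -/
theorem stmt3 {Ω : Type*} [MeasurableSpace Ω] (P : Measure Ω) [IsProbabilityMeasure P]
    {𝒲 : Type*} [MeasurableSpace 𝒲]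
    (N : ℕ) (W : Fin (N + 1) → Ω → 𝒲) (hmeas : ∀ i, Measurable (W i))
    (hexch : Exchangeable P W)
    (s : 𝒲 → ℝ) (hs : Measurable s)
    (hdist : ∀ᵐ ω ∂P, ∀ i j : Fin (N + 1), i ≠ j → s (W i ω) ≠ s (W j ω))
    (α : ℝ) (hα0 : 0 ≤ α) (hα1 : α ≤ 1) :
    P {ω | (s (W (Fin.last N) ω) : EReal) ≤
        augQuantile (fun i : Fin N => s (W (Fin.castSucc i) ω)) (1 - α)} ≤
      ENNReal.ofReal (1 - α + 1 / (N + 1)) :=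
  stmt3_general P N W hmeas hexch s hs hdist α
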